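/- In the centrality game with m = 2, if |N_s^{-2}(x)| ≥ 2, then every best response {v,w} of node s satisfies: either both v, w ∈ N_s^-(x), or v ∈ N_s^-(x) and w ∈ N_v^-(x). In particular, best responses are local: they only involve nodes at in-distance at most 2 from s. -/

import Mathlib

/-!
Let `Q` be the matrix `R2` of the profile in which `s` has no out-links, and `N = 1 - β Qᵀ`.
The row `g = N⁻¹ s` is the discounted hitting value of `s`: `g i = E[β^T]`, `T` the hitting
time of `s` by the random walk along out-links. Thus `g s = 1` and `g i = β/2 ∑_{j ∈ x i} g j`
for `i ≠ s`; the maximum principle gives `0 ≤ g ≤ 1`, and `g > 0` on the two-step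
in-neighbourhood of `s`. Linking `s` to `b` is a rank-one update of `N`, so by Sherman–Morrison
the centrality of `s` is `(1 - β) c / (1 - β/2 ∑_{j ∈ b} g j)` with `c = ∑ g j η j > 0`
independent of `b`: a best response maximises `∑_{j ∈ b} g j`. A node `i ≠ s` with `g i > 0`
that does not link to `s` has a successor `j ≠ s` with `g j ≥ g i / β > g i`; swapping `i` for
`j` improves the pair unless `j` is its other member, which forces the stated shape.
-/

open Finset Matrix

/-- Normalized adjacency matrix of the out-degree-2 graph `G(x)` where each node `i`
places out-links to the two nodes of `x i` (entries `1/2` on out-links). -/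
noncomputable def R2 {V : Type*} [Fintype V] [DecidableEq V] (x : V → Finset V) :
    Matrix V V ℝ :=
  Matrix.of fun i j => if j ∈ x i then (1 : ℝ) / 2 else 0

/-- Utility of player `s` in the game `Γ(V, β, η, 2)`: its Bonacich centrality
`((1-β)(I - β R(x)ᵀ)⁻¹ η)_s` in the formed graph. -/
noncomputable def util2 {V : Type*} [Fintype V] [DecidableEq V]
    (β : ℝ) (η : V → ℝ) (x : V → Finset V) (s : V) : ℝ :=
  ((1 - β) • ((1 - β • (R2 x)ᵀ)⁻¹).mulVec η) s

theorem sum_le_two_mul_of_card_eq_two {ι : Type*} {f : ι → ℝ} {t : Finset ι} (ht : t.card = 2)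
    {m : ℝ} (h : ∀ j ∈ t, f j ≤ m) : ∑ j ∈ t, f j ≤ 2 * m := by
  simpa [ht] using sum_le_card_nsmul t f m h

theorem two_mul_le_sum_of_card_eq_two {ι : Type*} {f : ι → ℝ} {t : Finset ι} (ht : t.card = 2)
    {m : ℝ} (h : ∀ j ∈ t, m ≤ f j) : 2 * m ≤ ∑ j ∈ t, f j := by
  simpa [ht] using card_nsmul_le_sum t f m h

theorem det_one_sub_smul_transpose_ne_zero {n : Type*} [Fintype n] [DecidableEq n]
    {β : ℝ} (hβ0 : 0 ≤ β) (hβ1 : β < 1) (P : Matrix n n ℝ)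
    (hP : ∀ i j, 0 ≤ P i j) (hrow : ∀ i, ∑ j, P i j ≤ 1) :
    (1 - β • Pᵀ).det ≠ 0 := by
  refine det_ne_zero_of_sum_col_lt_diag fun k => ?_
  have hoff : ∀ i ∈ univ.erase k, ‖(1 - β • Pᵀ) i k‖ = β * P k i := fun i hi => by
    simp [one_apply_ne (ne_of_mem_erase hi), abs_of_nonneg hβ0, abs_of_nonneg (hP k i)]
  have hdiag : ‖(1 - β • Pᵀ) k k‖ = 1 - β * P k k := by
    have : P k k ≤ 1 := (single_le_sum (fun j _ => hP k j) (mem_univ k)).trans (hrow k)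
    simp [abs_of_nonneg (by nlinarith : 0 ≤ 1 - β * P k k)]
  rw [sum_congr rfl hoff, hdiag, ← mul_sum]
  have := add_sum_erase univ (P k) (mem_univ k)
  nlinarith [hrow k, hP k k]

theorem inv_mulVec_apply_mul_eq_of_eq_add_vecMulVec {n K : Type*} [Fintype n] [DecidableEq n]
    [CommRing K] {M N : Matrix n n K} (hM : IsUnit M.det) (hN : IsUnit N.det) {u : n → K} {s : n}
    (hMN : N = M + vecMulVec u (Pi.single s 1)) (η : n → K) :
    (M⁻¹ *ᵥ η) s * (1 - (N⁻¹ *ᵥ u) s) = (N⁻¹ *ᵥ η) s := by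
  set y := M⁻¹ *ᵥ η
  have hNy : N *ᵥ y = η + y s • u := by
    have : vecMulVec u (Pi.single s 1) *ᵥ y = y s • u := by
      ext i; simp [vecMulVec, mulVec, dotProduct, Pi.single_apply, mul_comm]
    rw [hMN, add_mulVec, this, mulVec_mulVec, mul_nonsing_inv M hM, one_mulVec]
  have hy : y = N⁻¹ *ᵥ η + y s • N⁻¹ *ᵥ u := by
    rw [← mulVec_smul, ← mulVec_add, ← hNy, mulVec_mulVec, nonsing_inv_mul N hN, one_mulVec]
  have := congrFun hy s
  simp only [Pi.add_apply, Pi.smul_apply, smul_eq_mul] at this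
  linear_combination this

def IsHittingValue {V : Type*} (β : ℝ) (x : V → Finset V) (s : V) (g : V → ℝ) : Prop :=
  g s = 1 ∧ ∀ i ≠ s, g i = β / 2 * ∑ j ∈ x i, g j

namespace IsHittingValue

variable {V : Type*} {β : ℝ} {x : V → Finset V} {s : V} {g : V → ℝ}

theorem nonneg [Fintype V] (hg : IsHittingValue β x s g) (hβ0 : 0 ≤ β) (hβ1 : β < 1)
    (hx : ∀ i, (x i).card = 2) (i : V) : 0 ≤ g i := by
  obtain ⟨k, -, hmin⟩ := exists_min_image univ g ⟨s, mem_univ s⟩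
  suffices 0 ≤ g k from this.trans (hmin i (mem_univ i))
  by_contra! hneg
  have hks : k ≠ s := by rintro rfl; linarith [hg.1]
  have hsum := two_mul_le_sum_of_card_eq_two (hx k) fun j _ => hmin j (mem_univ j)
  have hk := hg.2 k hks
  nlinarith

theorem le_one [Fintype V] (hg : IsHittingValue β x s g) (hβ0 : 0 ≤ β) (hβ1 : β < 1)
    (hx : ∀ i, (x i).card = 2) (i : V) : g i ≤ 1 := by
  obtain ⟨k, -, hmax⟩ := exists_max_image univ g ⟨s, mem_univ s⟩
  refine (hmax i (mem_univ i)).trans ?_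
  by_contra! hgt
  have hks : k ≠ s := by rintro rfl; linarith [hg.1]
  have hsum := sum_le_two_mul_of_card_eq_two (hx k) fun j _ => hmax j (mem_univ j)
  have hk := hg.2 k hks
  nlinarith

theorem half_mul_le_of_mem [Fintype V] (hg : IsHittingValue β x s g) (hβ0 : 0 ≤ β)
    (hβ1 : β < 1) (hx : ∀ i, (x i).card = 2) {i j : V} (hi : i ≠ s) (hj : j ∈ x i) :
    β / 2 * g j ≤ g i := by
  rw [hg.2 i hi]
  exact mul_le_mul_of_nonneg_left
    (single_le_sum (fun k _ => hg.nonneg hβ0 hβ1 hx k) hj) (by positivity)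

theorem pos_of_reach_le_two [Fintype V] (hg : IsHittingValue β x s g) (hβ0 : 0 < β)
    (hβ1 : β < 1) (hx : ∀ i, (x i).card = 2) (hxs : s ∉ x s) {i : V} (hi : i ≠ s)
    (hreach : s ∈ x i ∨ ∃ t, s ∈ x t ∧ t ∈ x i) : 0 < g i := by
  have hin {k : V} (hk : k ≠ s) (hsk : s ∈ x k) : β / 2 ≤ g k := by
    simpa [hg.1] using hg.half_mul_le_of_mem hβ0.le hβ1 hx hk hsk
  rcases hreach with hs | ⟨t, hst, hti⟩
  · linarith [hin hi hs]
  · have ht : t ≠ s := by rintro rfl; exact hxs hst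
    nlinarith [hin ht hst, hg.half_mul_le_of_mem hβ0.le hβ1 hx hi hti]

theorem exists_mem_lt (hg : IsHittingValue β x s g) (hβ0 : 0 ≤ β) (hβ1 : β < 1)
    (hx : ∀ i, (x i).card = 2) {i : V} (hi : i ≠ s) (hpos : 0 < g i) (hsi : s ∉ x i) :
    ∃ j ∈ x i, j ≠ s ∧ g i < g j := by
  obtain ⟨j, hj, hmax⟩ := exists_max_image (x i) g (card_pos.mp (by rw [hx i]; norm_num))
  have hsum := sum_le_two_mul_of_card_eq_two (hx i) hmax
  have hgi := hg.2 i hi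
  refine ⟨j, hj, by rintro rfl; exact hsi hj, ?_⟩
  nlinarith

theorem exists_local_pair_of_isMax [DecidableEq V] (hg : IsHittingValue β x s g) (hβ0 : 0 ≤ β)
    (hβ1 : β < 1) (hx : ∀ i, (x i).card = 2) {i₁ i₂ : V} (h12 : i₁ ≠ i₂) (h1s : i₁ ≠ s)
    (h2s : i₂ ≠ s) (hpos₁ : 0 < g i₁) (hpos₂ : 0 < g i₂) {a : Finset V} (ha : a.card = 2)
    (hsa : s ∉ a) (hmax : ∀ b : Finset V, b.card = 2 → s ∉ b → ∑ j ∈ b, g j ≤ ∑ j ∈ a, g j) :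
    ∃ v w, v ≠ w ∧ a = {v, w} ∧ ((s ∈ x v ∧ s ∈ x w) ∨ (s ∈ x v ∧ v ∈ x w)) := by
  have hpair {p q : V} (hpq : p ≠ q) (hp : p ≠ s) (hq : q ≠ s) :
      g p + g q ≤ ∑ j ∈ a, g j := by
    simpa [sum_pair hpq] using hmax {p, q} (card_pair hpq) (by simp [hp.symm, hq.symm])
  obtain ⟨v, w, hvw, rfl, hwv⟩ : ∃ v w, v ≠ w ∧ a = {v, w} ∧ g w ≤ g v := by
    obtain ⟨p, q, hpq, rfl⟩ := card_eq_two.mp ha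
    rcases le_total (g q) (g p) with h | h
    · exact ⟨p, q, hpq, rfl, h⟩
    · exact ⟨q, p, hpq.symm, pair_comm p q, h⟩
  have hv : v ≠ s := by rintro rfl; simp at hsa
  have hw : w ≠ s := by rintro rfl; simp at hsa
  rw [sum_pair hvw] at hpair
  have hgv : 0 < g v := by linarith [hpair h12 h1s h2s]
  have hgw : 0 < g w := by
    obtain ⟨i, hiv, his, hi⟩ : ∃ i, i ≠ v ∧ i ≠ s ∧ 0 < g i := by
      by_cases h : i₁ = v
      · exact ⟨i₂, h ▸ h12.symm, h2s, hpos₂⟩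
      · exact ⟨i₁, h, h1s, hpos₁⟩
    linarith [hpair hiv.symm hv his]
  have hsv : s ∈ x v := by
    by_contra hsv
    obtain ⟨j, -, hjs, hj⟩ := hg.exists_mem_lt hβ0 hβ1 hx hv hgv hsv
    have hjw : j ≠ w := by rintro rfl; linarith
    linarith [hpair hjw hjs hw]
  refine ⟨v, w, hvw, rfl, ?_⟩
  by_cases hsw : s ∈ x w
  · exact .inl ⟨hsv, hsw⟩
  · obtain ⟨j, hjw, hjs, hj⟩ := hg.exists_mem_lt hβ0 hβ1 hx hw hgw hsw
    obtain rfl : j = v := by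
      by_contra hjv
      linarith [hpair (Ne.symm hjv) hv hjs]
    exact .inr ⟨hsv, hjw⟩

end IsHittingValue

section HittingValue

variable {V : Type*} [Fintype V] [DecidableEq V]

theorem R2_apply (x : V → Finset V) (i j : V) :
    R2 x i j = if j ∈ x i then 1 / 2 else 0 := rfl

theorem isUnit_det_one_sub_smul_R2_transpose {β : ℝ} (hβ0 : 0 ≤ β) (hβ1 : β < 1)
    {x : V → Finset V} (hx : ∀ i, (x i).card ≤ 2) :
    IsUnit (1 - β • (R2 x)ᵀ).det := by
  refine isUnit_iff_ne_zero.mpr (det_one_sub_smul_transpose_ne_zero hβ0 hβ1 _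
    (fun i j => by rw [R2_apply]; split_ifs <;> norm_num) fun i => ?_)
  have : ((x i).card : ℝ) ≤ 2 := by exact_mod_cast hx i
  simp only [R2_apply, sum_ite_mem, univ_inter, sum_const, nsmul_eq_mul]
  linarith

theorem R2_update_transpose (x : V → Finset V) (s : V) (b : Finset V) :
    (R2 (Function.update x s b))ᵀ =
      (R2 (Function.update x s ∅))ᵀ + vecMulVec (R2 (fun _ => b) s) (Pi.single s 1) := by
  ext i j
  rcases eq_or_ne j s with rfl | hj
  · simp [R2_apply, vecMulVec]
  · simp [R2_apply, vecMulVec, hj]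

noncomputable def hittingValue (β : ℝ) (x : V → Finset V) (s : V) : V → ℝ :=
  (1 - β • (R2 (Function.update x s ∅))ᵀ)⁻¹ s

theorem isHittingValue_hittingValue {β : ℝ} (hβ0 : 0 ≤ β) (hβ1 : β < 1)
    {x : V → Finset V} (hx : ∀ i, (x i).card ≤ 2) (s : V) :
    IsHittingValue β x s (hittingValue β x s) := by
  set N := 1 - β • (R2 (Function.update x s ∅))ᵀ
  have hN : IsUnit N.det := isUnit_det_one_sub_smul_R2_transpose hβ0 hβ1 fun i => by
    rcases eq_or_ne i s with rfl | hi
    · simp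
    · simpa [hi] using hx i
  have key : ∀ i, hittingValue β x s i = (if s = i then 1 else 0) +
      β / 2 * ∑ j ∈ Function.update x s ∅ i, hittingValue β x s j := by
    intro i
    have := congrFun (congrFun (nonsing_inv_mul N hN) s) i
    simp only [N, mul_apply, Matrix.sub_apply, one_apply, Matrix.smul_apply, transpose_apply,
      R2_apply, smul_eq_mul, mul_ite, mul_zero, mul_sub, mul_one, sum_sub_distrib, sum_ite_eq',
      mem_univ, if_true, sum_ite_mem, univ_inter] at this
    rw [← sum_mul] at this
    rw [hittingValue]
    linear_combination this
  exact ⟨by simpa using key s, fun i hi => by simpa [hi, hi.symm] using key i⟩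

theorem util2_update_mul {β : ℝ} (hβ0 : 0 ≤ β) (hβ1 : β < 1) (η : V → ℝ)
    {x : V → Finset V} (hx : ∀ i, (x i).card ≤ 2) (s : V) {b : Finset V} (hb : b.card ≤ 2) :
    util2 β η (Function.update x s b) s * (1 - β / 2 * ∑ j ∈ b, hittingValue β x s j) =
      (1 - β) * ∑ j, hittingValue β x s j * η j := by
  have hcard {c : Finset V} (hc : c.card ≤ 2) (i : V) :
      (Function.update x s c i).card ≤ 2 := by
    rcases eq_or_ne i s with rfl | hi <;> simp [*]
  set M := 1 - β • (R2 (Function.update x s b))ᵀ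
  set N := 1 - β • (R2 (Function.update x s ∅))ᵀ
  have hMN : N = M + vecMulVec (β • R2 (fun _ => b) s) (Pi.single s 1) := by
    simp only [M, N]
    rw [R2_update_transpose x s b, smul_add, smul_vecMulVec]
    abel
  have key := inv_mulVec_apply_mul_eq_of_eq_add_vecMulVec
    (isUnit_det_one_sub_smul_R2_transpose hβ0 hβ1 (hcard hb))
    (isUnit_det_one_sub_smul_R2_transpose hβ0 hβ1 (hcard (by simp))) hMN η
  have hu :
      (N⁻¹ *ᵥ (β • R2 (fun _ => b) s)) s = β / 2 * ∑ j ∈ b, hittingValue β x s j := by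
    simp only [N, hittingValue, mulVec, dotProduct, Pi.smul_apply, R2_apply, smul_eq_mul, mul_ite,
      mul_zero, sum_ite_mem, univ_inter, mul_sum]
    exact sum_congr rfl fun _ _ => by ring
  rw [hu] at key
  simp only [util2, Pi.smul_apply, smul_eq_mul, mul_assoc, key]
  rfl

theorem sum_hittingValue_le_of_util2_le {β : ℝ} (hβ0 : 0 < β) (hβ1 : β < 1) {η : V → ℝ}
    (hη : ∀ i, 0 < η i) {x : V → Finset V} (hx : ∀ i, (x i).card = 2) {s : V}
    {a b : Finset V} (ha : a.card = 2) (hb : b.card = 2)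
    (h : util2 β η (Function.update x s b) s ≤ util2 β η (Function.update x s a) s) :
    ∑ j ∈ b, hittingValue β x s j ≤ ∑ j ∈ a, hittingValue β x s j := by
  have hua := util2_update_mul hβ0.le hβ1 η (fun i => (hx i).le) s ha.le
  have hub := util2_update_mul hβ0.le hβ1 η (fun i => (hx i).le) s hb.le
  have hg := isHittingValue_hittingValue hβ0.le hβ1 (fun i => (hx i).le) s
  set g := hittingValue β x s
  have hc : 0 < (1 - β) * ∑ j, g j * η j := by
    refine mul_pos (by linarith) (lt_of_lt_of_le ?_ (single_le_sum
      (fun j _ => mul_nonneg (hg.nonneg hβ0.le hβ1 hx j) (hη j).le) (mem_univ s)))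
    simpa [hg.1] using hη s
  have hden {c : Finset V} (hcard : c.card = 2) : 0 < 1 - β / 2 * ∑ j ∈ c, g j := by
    have := sum_le_two_mul_of_card_eq_two hcard fun j _ => hg.le_one hβ0.le hβ1 hx j
    nlinarith
  have hpa : 0 < util2 β η (Function.update x s a) s :=
    pos_of_mul_pos_left (hua ▸ hc) (hden ha).le
  have hD : 1 - β / 2 * ∑ j ∈ a, g j ≤ 1 - β / 2 * ∑ j ∈ b, g j :=
    le_of_mul_le_mul_left (by nlinarith [hden hb]) hpa
  exact le_of_mul_le_mul_left (by linarith) (half_pos hβ0)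

end HittingValue

theorem best_response_locality_m2_general
    {V : Type*} [Fintype V] [DecidableEq V]
    (β : ℝ) (hβ0 : 0 < β) (hβ1 : β < 1)
    (η : V → ℝ) (hη : ∀ i, 0 < η i)
    (x : V → Finset V) (hx : ∀ i, (x i).card = 2 ∧ i ∉ x i)
    (s : V)
    (hN : 2 ≤ Set.ncard {i : V | i ≠ s ∧ (s ∈ x i ∨ ∃ t, s ∈ x t ∧ t ∈ x i)}) :
    ∀ a : Finset V, a.card = 2 → s ∉ a →
      (∀ b : Finset V, b.card = 2 → s ∉ b →
        util2 β η (Function.update x s b) s ≤ util2 β η (Function.update x s a) s) →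
      ∃ v w, v ≠ w ∧ a = {v, w} ∧
        ((s ∈ x v ∧ s ∈ x w) ∨ (s ∈ x v ∧ v ∈ x w)) := by
  intro a ha hsa hbest
  have hcard : ∀ i, (x i).card = 2 := fun i => (hx i).1
  have hg := isHittingValue_hittingValue hβ0.le hβ1 (fun i => (hcard i).le) s
  obtain ⟨i₁, i₂, ⟨h1s, hreach₁⟩, ⟨h2s, hreach₂⟩, h12⟩ :=
    (Set.one_lt_ncard_iff (Set.toFinite _)).mp hN
  exact hg.exists_local_pair_of_isMax hβ0.le hβ1 hcard h12 h1s h2s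
    (hg.pos_of_reach_le_two hβ0 hβ1 hcard (hx s).2 h1s hreach₁)
    (hg.pos_of_reach_le_two hβ0 hβ1 hcard (hx s).2 h2s hreach₂) ha hsa
    fun b hb hsb => sum_hittingValue_le_of_util2_le hβ0 hβ1 hη hcard ha hb (hbest b hb hsb)

/-- in `Γ(V,β,η,2)`, if the two-step in-neighborhood of `s` has at least
two elements, then every best response `{v,w}` of `s` satisfies: either both `v` and
`w` are in-neighbors of `s`, or `v` is an in-neighbor of `s` and `w` an in-neighbor
of `v` (locality of the best response). -/
theorem best_response_locality_m2
    {V : Type*} [Fintype V] [DecidableEq V]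
    (β : ℝ) (hβ0 : 0 < β) (hβ1 : β < 1)
    (η : V → ℝ) (hη : ∀ i, 0 < η i) (hηsum : ∑ i, η i = 1)
    (x : V → Finset V) (hx : ∀ i, (x i).card = 2 ∧ i ∉ x i)
    (s : V)
    (hN : 2 ≤ Set.ncard {i : V | i ≠ s ∧ (s ∈ x i ∨ ∃ t, s ∈ x t ∧ t ∈ x i)}) :
    ∀ a : Finset V, a.card = 2 → s ∉ a →
      (∀ b : Finset V, b.card = 2 → s ∉ b →
        util2 β η (Function.update x s b) s ≤ util2 β η (Function.update x s a) s) →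
      ∃ v w, v ≠ w ∧ a = {v, w} ∧
        ((s ∈ x v ∧ s ∈ x w) ∨ (s ∈ x v ∧ v ∈ x w)) :=
  best_response_locality_m2_general β hβ0 hβ1 η hη x hx s hN
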